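/- arXiv:1810.06154 — 5 statements merged into one kernel-verified Lean document; each statement's English description precedes it below -/
import Mathlib

section
/- For a smooth closed curve γ parametrized by arclength with curvature k, the quantity Q(s) = (k_sss)² + (k_ss)²k² + (1/4)(k_s)⁴ − k_ss (k_s)² k is constant in s whenever γ satisfies the ideal curve equation k_ssss + k_ss k² − (1/2) k_s² k = 0. -/
open Real MeasureTheory

/-- The quantity `Q(s) = k_sss² + k_ss²k² + ¼k_s⁴ − k_ss k_s² k`. -/
noncomputable def Qfun (k : ℝ → ℝ) (s : ℝ) : ℝ :=
  (iteratedDeriv 3 k s) ^ 2 + (iteratedDeriv 2 k s) ^ 2 * (k s) ^ 2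
    + (1 / 4) * (deriv k s) ^ 4 - iteratedDeriv 2 k s * (deriv k s) ^ 2 * k s

/-- For a smooth closed (L-periodic) arclength-parametrized curve with
curvature `k` satisfying the ideal curve equation `k_ssss + k_ss k² − ½ k_s² k = 0`,
the quantity `Q` is constant in `s`. -/
theorem Qfun_const_of_ideal (k : ℝ → ℝ) (L : ℝ)
    (hL : 0 < L) (hk : ContDiff ℝ (⊤ : ℕ∞) k) (hper : Function.Periodic k L)
    (hideal : ∀ s : ℝ, iteratedDeriv 4 k s + iteratedDeriv 2 k s * (k s) ^ 2
      - (1 / 2) * (deriv k s) ^ 2 * k s = 0) :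
    ∀ s₁ s₂ : ℝ, Qfun k s₁ = Qfun k s₂ := by
  have hd : ∀ n : ℕ, Differentiable ℝ (iteratedDeriv n k) := fun n =>
    hk.differentiable_iteratedDeriv n (by exact_mod_cast ENat.coe_lt_top n)
  have hD : ∀ (n : ℕ) (s : ℝ),
      HasDerivAt (iteratedDeriv n k) (iteratedDeriv (n + 1) k s) s := by
    intro n s
    rw [iteratedDeriv_succ]
    exact ((hd n) s).hasDerivAt
  have hQ : ∀ s : ℝ, HasDerivAt (Qfun k) 0 s := by
    intro s
    have h0 : HasDerivAt k (deriv k s) s := ((hk.differentiable (by simp)) s).hasDerivAt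
    have h1 : HasDerivAt (deriv k) (iteratedDeriv 2 k s) s := by
      have h1' : iteratedDeriv 1 k = deriv k := iteratedDeriv_one
      have := hD 1 s
      rw [h1'] at this
      simpa using this
    have h2 : HasDerivAt (iteratedDeriv 2 k) (iteratedDeriv 3 k s) s := by
      simpa using hD 2 s
    have h3 : HasDerivAt (iteratedDeriv 3 k) (iteratedDeriv 4 k s) s := by
      simpa using hD 3 s
    have key := (((h3.pow 2).add ((h2.pow 2).mul (h0.pow 2))).add
      ((hasDerivAt_const s ((1:ℝ)/4)).mul (h1.pow 4))).sub ((h2.mul (h1.pow 2)).mul h0)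
    have h := hideal s
    unfold Qfun
    refine key.congr_deriv ?_
    simp only [Pi.pow_apply, Pi.mul_apply, Nat.cast_ofNat, Nat.add_one_sub_one, Nat.reduceSub]
    linear_combination (2 * iteratedDeriv 3 k s) * h
  intro s₁ s₂
  exact is_const_of_deriv_eq_zero (fun x => (hQ x).differentiableAt)
    (fun x => (hQ x).deriv) s₁ s₂
end

section
/- If γ is a smooth closed ideal planar curve (i.e., k_ssss + k² k_ss − (1/2) k k_s² = 0) and the constant C = (k_sss)² + (k_ss)²k² + (1/4)k_s⁴ − k_ss k_s² k equals 0, then k is constant, so γ is a round circle traversed ω times. -/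
open Real MeasureTheory

/-- If `γ` is a smooth closed ideal planar curve (curvature `k` smooth,
`L`-periodic, satisfying `k_ssss + k² k_ss − ½ k k_s² = 0`) and the conserved constant
`C = Q` equals `0`, then the curvature `k` is constant (so the curve is a round circle
traversed `ω` times). -/
theorem curvature_const_of_ideal_C_zero (k : ℝ → ℝ) (L : ℝ)
    (hL : 0 < L) (hk : ContDiff ℝ (⊤ : ℕ∞) k) (hper : Function.Periodic k L)
    (hideal : ∀ s : ℝ, iteratedDeriv 4 k s + (k s) ^ 2 * iteratedDeriv 2 k s
      - (1 / 2) * k s * (deriv k s) ^ 2 = 0)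
    (hC : ∀ s : ℝ, Qfun k s = 0) :
    ∀ s₁ s₂ : ℝ, k s₁ = k s₂ := by
  -- Q = k_sss² + (k_ss k - ½ k_s²)², a sum of squares.
  have hsq : ∀ s, (iteratedDeriv 3 k s) ^ 2
      + (iteratedDeriv 2 k s * k s - (1 / 2) * (deriv k s) ^ 2) ^ 2 = 0 := by
    intro s
    have := hC s
    unfold Qfun at this
    nlinarith [this]
  have h3 : ∀ s, iteratedDeriv 3 k s = 0 := by
    intro s
    have h := hsq s
    nlinarith [sq_nonneg (iteratedDeriv 3 k s),
      sq_nonneg (iteratedDeriv 2 k s * k s - (1 / 2) * (deriv k s) ^ 2)]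
  have h2 : ∀ s, iteratedDeriv 2 k s * k s = (1 / 2) * (deriv k s) ^ 2 := by
    intro s
    have h := hsq s
    nlinarith [sq_nonneg (iteratedDeriv 3 k s),
      sq_nonneg (iteratedDeriv 2 k s * k s - (1 / 2) * (deriv k s) ^ 2)]
  -- k'' is constant since k''' = 0
  have hd2 : Differentiable ℝ (iteratedDeriv 2 k) :=
    hk.differentiable_iteratedDeriv 2 (by decide)
  have hconst2 : ∀ s, iteratedDeriv 2 k s = iteratedDeriv 2 k 0 := by
    intro s
    exact is_const_of_deriv_eq_zero hd2
      (fun x => by rw [← iteratedDeriv_succ]; exact h3 x) s 0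
  set c := iteratedDeriv 2 k 0 with hc
  -- deriv k is periodic
  have hdk : Differentiable ℝ k := hk.differentiable (by simp)
  have hperd : ∀ s, deriv k (s + L) = deriv k s := by
    intro s
    have : (fun x => k (x + L)) = k := funext fun x => hper x
    calc deriv k (s + L) = deriv (fun x => k (x + L)) s := (deriv_comp_add_const _ _ _).symm
      _ = deriv k s := by rw [this]
  -- deriv k has constant derivative c, so deriv k s = deriv k 0 + c * s
  have hdd : Differentiable ℝ (deriv k) := by
    have := hk.differentiable_iteratedDeriv 1 (by exact_mod_cast lt_top_iff_ne_top.2 (by simp))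
    simpa [iteratedDeriv_one] using this
  have haffine : ∀ s, deriv k s = deriv k 0 + c * s := by
    intro s
    have hg : ∀ x, deriv (fun t => deriv k t - c * t) x = 0 := by
      intro x
      rw [deriv_fun_sub (hdd x) (by fun_prop)]
      have : deriv (fun t => c * t) x = c := by
        simpa using ((hasDerivAt_id x).const_mul c).deriv
      rw [this]
      have : deriv (deriv k) x = iteratedDeriv 2 k x := by
        rw [iteratedDeriv_succ, iteratedDeriv_one]
      rw [this, hconst2 x]; ring
    have := is_const_of_deriv_eq_zero (by fun_prop) hg s 0
    simp at this
    linarith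
  -- periodicity forces c = 0
  have hc0 : c = 0 := by
    have h1 := hperd 0
    have h2' := haffine (0 + L)
    have h3' := haffine 0
    rw [h1] at h2'
    have : c * L = 0 := by linarith [h2', h3']
    rcases mul_eq_zero.1 this with h | h
    · exact h
    · exact absurd h (ne_of_gt hL)
  -- then k' = 0 everywhere
  have hds : ∀ s, deriv k s = 0 := by
    intro s
    have := h2 s
    rw [hconst2 s, hc0] at this
    nlinarith [sq_nonneg (deriv k s)]
  intro s₁ s₂
  exact is_const_of_deriv_eq_zero hdk hds s₁ s₂
end

section
/- Every smooth closed planar curve satisfying the ideal curve equation k_ssss + k² k_ss − (1/2) k k_s² = 0 has constant curvature; equivalently, its image is a round circle covered ω times, where ω is the winding number. -/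
open Real MeasureTheory

/-- Rotation by `π/2` in the plane (sending the unit tangent to the unit normal). -/
noncomputable def rot2 (p : EuclideanSpace ℝ (Fin 2)) : EuclideanSpace ℝ (Fin 2) :=
  (WithLp.equiv 2 (Fin 2 → ℝ)).symm ![-p 1, p 0]

open RealInnerProductSpace
open scoped ContDiff

lemma rot2_apply0 (p : EuclideanSpace ℝ (Fin 2)) : rot2 p 0 = -p 1 := by
  simp [rot2, WithLp.equiv_symm_apply, PiLp.toLp_apply]

lemma rot2_apply1 (p : EuclideanSpace ℝ (Fin 2)) : rot2 p 1 = p 0 := by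
  simp [rot2, WithLp.equiv_symm_apply, PiLp.toLp_apply]

lemma rot2_add (p q : EuclideanSpace ℝ (Fin 2)) : rot2 (p + q) = rot2 p + rot2 q := by
  ext i; fin_cases i <;> simp [rot2_apply0, rot2_apply1, PiLp.add_apply] <;> ring

lemma rot2_smul (c : ℝ) (p : EuclideanSpace ℝ (Fin 2)) : rot2 (c • p) = c • rot2 p := by
  ext i; fin_cases i <;> simp [rot2_apply0, rot2_apply1, PiLp.smul_apply, mul_comm]

lemma rot2_rot2 (p : EuclideanSpace ℝ (Fin 2)) : rot2 (rot2 p) = -p := by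
  ext i; fin_cases i <;> simp [rot2_apply0, rot2_apply1, PiLp.neg_apply]

lemma inner_rot2_self (p : EuclideanSpace ℝ (Fin 2)) : ⟪p, rot2 p⟫ = 0 := by
  simp [PiLp.inner_apply, Fin.sum_univ_two, rot2_apply0, rot2_apply1]
  ring

lemma norm_rot2 (p : EuclideanSpace ℝ (Fin 2)) : ‖rot2 p‖ = ‖p‖ := by
  simp [EuclideanSpace.norm_eq, Fin.sum_univ_two, rot2_apply0, rot2_apply1]
  ring_nf

noncomputable def rot2CLM : EuclideanSpace ℝ (Fin 2) →L[ℝ] EuclideanSpace ℝ (Fin 2) :=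
  LinearMap.toContinuousLinearMap
    { toFun := rot2
      map_add' := rot2_add
      map_smul' := rot2_smul }

lemma rot2CLM_apply (p : EuclideanSpace ℝ (Fin 2)) : rot2CLM p = rot2 p := rfl

lemma periodic_deriv_aux {F : Type*} [NormedAddCommGroup F] [NormedSpace ℝ F] {f : ℝ → F}
    {L : ℝ} (h : Function.Periodic f L) : Function.Periodic (deriv f) L := by
  intro s
  have hf : (fun x => f (x + L)) = f := funext h
  rw [← deriv_comp_add_const f L s, hf]

/-- Every smooth closed planar curve, arclength parametrized, whose
curvature satisfies the ideal curve equation `k_ssss + k² k_ss − ½ k k_s² = 0` has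
constant curvature; equivalently, its image is a round circle (covered `ω` times). -/
theorem ideal_curve_rigidity (γ : ℝ → EuclideanSpace ℝ (Fin 2)) (k : ℝ → ℝ) (L : ℝ)
    (hL : 0 < L) (hγ : ContDiff ℝ (⊤ : ℕ∞) γ) (hk : ContDiff ℝ (⊤ : ℕ∞) k)
    (hper : Function.Periodic γ L)
    (hunit : ∀ s : ℝ, ‖deriv γ s‖ = 1)
    (hfrenet : ∀ s : ℝ, deriv (deriv γ) s = k s • rot2 (deriv γ s))
    (hideal : ∀ s : ℝ, iteratedDeriv 4 k s + (k s) ^ 2 * iteratedDeriv 2 k s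
      - (1 / 2) * k s * (deriv k s) ^ 2 = 0) :
    (∀ s₁ s₂ : ℝ, k s₁ = k s₂) ∧
      ∃ c : EuclideanSpace ℝ (Fin 2), ∃ r : ℝ, 0 < r ∧ ∀ s : ℝ, dist (γ s) c = r := by
  -- notation
  set T : ℝ → EuclideanSpace ℝ (Fin 2) := deriv γ with hTdef
  set N : ℝ → EuclideanSpace ℝ (Fin 2) := fun s => rot2 (T s) with hNdef
  set u : ℝ → ℝ := fun s => ⟪γ s, N s⟫ with hudef
  set τ : ℝ → ℝ := fun s => ⟪γ s, T s⟫ with hτdef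
  -- smoothness
  have hγ' : ContDiff ℝ ∞ γ := hγ.of_le (by simp)
  have hk' : ContDiff ℝ ∞ k := hk.of_le (by simp)
  have hTc : ContDiff ℝ ∞ T := (contDiff_infty_iff_deriv.mp hγ').2
  have hNc : ContDiff ℝ ∞ N := rot2CLM.contDiff.comp hTc
  have hk1c : ContDiff ℝ ∞ (deriv k) := (contDiff_infty_iff_deriv.mp hk').2
  have hk2c : ContDiff ℝ ∞ (deriv (deriv k)) := (contDiff_infty_iff_deriv.mp hk1c).2
  have hk3c : ContDiff ℝ ∞ (deriv (deriv (deriv k))) := (contDiff_infty_iff_deriv.mp hk2c).2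
  -- basic derivative facts
  have hγd : ∀ s, HasDerivAt γ (T s) s := fun s => ((hγ.differentiable (by simp)) s).hasDerivAt
  have hTd : ∀ s, HasDerivAt T (k s • N s) s := fun s => by
    have h := ((hTc.differentiable (by norm_num)) s).hasDerivAt
    rwa [show deriv T s = k s • N s from hfrenet s] at h
  have hNd : ∀ s, HasDerivAt N (-(k s) • T s) s := fun s => by
    have h := (rot2CLM.hasFDerivAt (x := T s)).comp_hasDerivAt s (hTd s)
    have hfun : (⇑rot2CLM ∘ T) = N := by
      funext x
      simp [hNdef, rot2CLM_apply]
    have h2 : rot2CLM (k s • N s) = -(k s) • T s := by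
      rw [ContinuousLinearMap.map_smul, rot2CLM_apply]
      simp only [hNdef]
      rw [rot2_rot2, smul_neg, neg_smul]
    rw [hfun, h2] at h
    exact h
  have hkd : ∀ s, HasDerivAt k (deriv k s) s := fun s =>
    ((hk.differentiable (by simp)) s).hasDerivAt
  have hk1d : ∀ s, HasDerivAt (deriv k) (deriv (deriv k) s) s := fun s =>
    ((hk1c.differentiable (by norm_num)) s).hasDerivAt
  have hk2d : ∀ s, HasDerivAt (deriv (deriv k)) (deriv (deriv (deriv k)) s) s := fun s =>
    ((hk2c.differentiable (by norm_num)) s).hasDerivAt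
  have hk3d : ∀ s, HasDerivAt (deriv (deriv (deriv k))) (deriv (deriv (deriv (deriv k))) s) s :=
    fun s => ((hk3c.differentiable (by norm_num)) s).hasDerivAt
  have hinnerTT : ∀ s, ⟪T s, T s⟫ = 1 := fun s => by
    rw [real_inner_self_eq_norm_mul_norm, hunit s, mul_one]
  have hinnerTN : ∀ s, ⟪T s, N s⟫ = 0 := fun s => inner_rot2_self (T s)
  have hud : ∀ s, HasDerivAt u (-(k s * τ s)) s := fun s => by
    have h := HasDerivAt.inner (𝕜 := ℝ) (hγd s) (hNd s)
    have h2 : ⟪γ s, -(k s) • T s⟫ + ⟪T s, N s⟫ = -(k s * τ s) := by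
      rw [real_inner_smul_right, hinnerTN s, hτdef]
      ring
    rwa [h2] at h
  have hτd : ∀ s, HasDerivAt τ (1 + k s * u s) s := fun s => by
    have h := HasDerivAt.inner (𝕜 := ℝ) (hγd s) (hTd s)
    have h2 : ⟪γ s, k s • N s⟫ + ⟪T s, T s⟫ = 1 + k s * u s := by
      rw [real_inner_smul_right, hinnerTT s, hudef]
      ring
    rwa [h2] at h
  -- periodicity
  have hTper : Function.Periodic T L := periodic_deriv_aux hper
  have hNper : Function.Periodic N L := fun s => by rw [hNdef]; simp only [hTper s]
  have hkper : Function.Periodic k L := fun s => by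
    have hder : deriv T (s + L) = deriv T s := periodic_deriv_aux hTper s
    rw [hfrenet (s + L), hfrenet s] at hder
    have hTsL : T (s + L) = T s := hTper s
    rw [hTsL] at hder
    have hne : rot2 (T s) ≠ 0 := by
      intro h0
      have : ‖rot2 (T s)‖ = 0 := by rw [h0, norm_zero]
      rw [norm_rot2, hunit s] at this
      norm_num at this
    exact smul_left_injective ℝ hne hder
  have huper : Function.Periodic u L := fun s => by
    rw [hudef]; simp only [hper s, hNper s]
  have hτper : Function.Periodic τ L := fun s => by
    rw [hτdef]; simp only [hper s, hTper s]
  have hk1per : Function.Periodic (deriv k) L := periodic_deriv_aux hkper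
  have hk2per : Function.Periodic (deriv (deriv k)) L := periodic_deriv_aux hk1per
  have hk3per : Function.Periodic (deriv (deriv (deriv k))) L := periodic_deriv_aux hk2per
  -- the ideal equation with explicit derivatives
  have hideal' : ∀ s, deriv (deriv (deriv (deriv k))) s + (k s) ^ 2 * deriv (deriv k) s
      - (1 / 2) * k s * (deriv k s) ^ 2 = 0 := fun s => by
    have h := hideal s
    rw [show (4 : ℕ) = 3 + 1 from rfl, iteratedDeriv_succ,
      show (3 : ℕ) = 2 + 1 from rfl, iteratedDeriv_succ,
      show (2 : ℕ) = 1 + 1 from rfl, iteratedDeriv_succ,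
      iteratedDeriv_one] at h
    exact h
  -- the magic primitive W with W' = -(3/2) (k')²
  set W : ℝ → ℝ := fun s =>
    deriv (deriv (deriv k)) s * u s + deriv (deriv k) s * (k s * τ s)
      - 1 / 2 * deriv k s ^ 2 * τ s - k s * deriv k s with hWdef
  have hWd : ∀ s, HasDerivAt W (-(3 / 2) * deriv k s ^ 2) s := fun s => by
    have h1 := (hk3d s).mul (hud s)
    have h2 := (hk2d s).mul ((hkd s).mul (hτd s))
    have h3 := (((hk1d s).pow 2).const_mul (1 / 2 : ℝ)).mul (hτd s)
    have h4 := (hkd s).mul (hk1d s)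
    have h := ((h1.add h2).sub h3).sub h4
    refine (h : HasDerivAt W _ s).congr_deriv ?_
    have hE := hideal' s
    simp only [Pi.mul_apply, Pi.pow_apply]
    linear_combination (u s) * hE
  have hWper : Function.Periodic W L := fun s => by
    rw [hWdef]
    simp only [hkper s, hk1per s, hk2per s, hk3per s, huper s, hτper s]
  -- conclusion: deriv k ≡ 0
  have hsqcont : Continuous fun s => deriv k s ^ 2 := ((hk1c.continuous).pow 2)
  have hint : ∀ a b : ℝ, IntervalIntegrable (fun s => deriv k s ^ 2) volume a b :=
    fun a b => hsqcont.intervalIntegrable a b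
  have hzero : ∀ a : ℝ, (∫ x in a..(a + L), deriv k x ^ 2) = 0 := fun a => by
    have hftc := intervalIntegral.integral_eq_sub_of_hasDerivAt
      (f := W) (f' := fun x => -(3 / 2) * deriv k x ^ 2)
      (fun x _ => hWd x)
      ((continuous_const.mul hsqcont).intervalIntegrable a (a + L))
    rw [hWper a, sub_self] at hftc
    rw [intervalIntegral.integral_const_mul] at hftc
    have := hftc
    nlinarith [this]
  have hk1zero : ∀ t : ℝ, deriv k t = 0 := by
    intro t
    by_contra hne
    have hpos : 0 < deriv k t ^ 2 :=
      lt_of_le_of_ne (sq_nonneg _) (Ne.symm (pow_ne_zero 2 hne))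
    -- find a small interval around t where (k')² is positive
    have hopen : IsOpen {x : ℝ | 0 < deriv k x ^ 2} := isOpen_lt continuous_const hsqcont
    obtain ⟨ε, hε, hball⟩ := Metric.isOpen_iff.mp hopen t hpos
    set δ : ℝ := min (ε / 2) (L / 2) with hδdef
    have hδ : 0 < δ := lt_min (by linarith) (by linarith)
    have hδε : δ ≤ ε / 2 := min_le_left _ _
    have hδL : δ ≤ L / 2 := min_le_right _ _
    have hposIoo : ∀ x ∈ Set.Ioo (t - δ) (t + δ), 0 < deriv k x ^ 2 := by
      intro x hx
      apply hball
      rw [Metric.mem_ball, Real.dist_eq, abs_lt]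
      constructor <;> [linarith [hx.1]; linarith [hx.2]]
    have hmid : 0 < ∫ x in (t - δ)..(t + δ), deriv k x ^ 2 :=
      intervalIntegral.intervalIntegral_pos_of_pos_on (hint _ _) hposIoo (by linarith)
    have htot : (∫ x in (t - L / 2)..(t + L / 2), deriv k x ^ 2) = 0 := by
      have := hzero (t - L / 2)
      rwa [show t - L / 2 + L = t + L / 2 by ring] at this
    have hsplit1 : (∫ x in (t - L / 2)..(t - δ), deriv k x ^ 2)
        + (∫ x in (t - δ)..(t + L / 2), deriv k x ^ 2)
        = ∫ x in (t - L / 2)..(t + L / 2), deriv k x ^ 2 :=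
      intervalIntegral.integral_add_adjacent_intervals (hint _ _) (hint _ _)
    have hsplit2 : (∫ x in (t - δ)..(t + δ), deriv k x ^ 2)
        + (∫ x in (t + δ)..(t + L / 2), deriv k x ^ 2)
        = ∫ x in (t - δ)..(t + L / 2), deriv k x ^ 2 :=
      intervalIntegral.integral_add_adjacent_intervals (hint _ _) (hint _ _)
    have hnn1 : 0 ≤ ∫ x in (t - L / 2)..(t - δ), deriv k x ^ 2 :=
      intervalIntegral.integral_nonneg (by linarith) (fun x _ => sq_nonneg _)
    have hnn2 : 0 ≤ ∫ x in (t + δ)..(t + L / 2), deriv k x ^ 2 :=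
      intervalIntegral.integral_nonneg (by linarith) (fun x _ => sq_nonneg _)
    linarith
  have hconst : ∀ s₁ s₂ : ℝ, k s₁ = k s₂ := fun s₁ s₂ =>
    is_const_of_deriv_eq_zero (hk.differentiable (by simp)) hk1zero s₁ s₂
  refine ⟨hconst, ?_⟩
  -- Part 2: the curve is a circle
  by_cases hk0 : k 0 = 0
  · -- impossible: the curve would be a line, contradicting periodicity
    exfalso
    have hTconst : ∀ s, T s = T 0 := fun s =>
      is_const_of_deriv_eq_zero (hTc.differentiable (by norm_num))
        (fun x => by rw [hfrenet x, hconst x 0, hk0, zero_smul]) s 0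
    have hgd : ∀ s, HasDerivAt (fun x => γ x - x • T 0) 0 s := fun s => by
      have h := (hγd s).sub ((hasDerivAt_id s).smul_const (T 0))
      have h2 : T s - (1 : ℝ) • T 0 = 0 := by
        rw [one_smul, hTconst s, sub_self]
      rwa [h2] at h
    have hgconst : γ L - L • T 0 = γ 0 - (0 : ℝ) • T 0 :=
      is_const_of_deriv_eq_zero (fun x => (hgd x).differentiableAt)
        (fun x => (hgd x).deriv) L 0
    have hγL : γ L = γ 0 := by
      have := hper 0
      rwa [zero_add] at this
    rw [hγL, zero_smul, sub_zero] at hgconst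
    have hT0 : L • T 0 = 0 := sub_eq_self.mp hgconst
    have hT00 : T 0 = 0 := by
      rcases smul_eq_zero.mp hT0 with h | h
      · exact absurd h (ne_of_gt hL)
      · exact h
    have h1 := hunit 0
    rw [hT00, norm_zero] at h1
    norm_num at h1
  · -- the curve is a circle of radius 1/|k 0|
    have hCd : ∀ s, HasDerivAt (fun x => γ x + (k 0)⁻¹ • N x) 0 s := fun s => by
      have h := (hγd s).add ((hNd s).const_smul ((k 0)⁻¹))
      have h2 : T s + (k 0)⁻¹ • (-(k s) • T s) = 0 := by
        rw [hconst s 0, smul_smul]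
        rw [show (k 0)⁻¹ * -k 0 = -1 by field_simp]
        rw [neg_one_smul, add_neg_cancel]
      rwa [h2] at h
    have hCconst : ∀ s, γ s + (k 0)⁻¹ • N s = γ 0 + (k 0)⁻¹ • N 0 := fun s =>
      is_const_of_deriv_eq_zero (fun x => (hCd x).differentiableAt)
        (fun x => (hCd x).deriv) s 0
    refine ⟨γ 0 + (k 0)⁻¹ • N 0, |k 0|⁻¹, by positivity, fun s => ?_⟩
    rw [← hCconst s]
    rw [dist_eq_norm]
    have : γ s - (γ s + (k 0)⁻¹ • N s) = -((k 0)⁻¹ • N s) := by abel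
    rw [this, norm_neg, norm_smul]
    rw [hNdef]
    simp only []
    rw [norm_rot2, hunit s]
    simp [abs_inv]
end

section
/- For any smooth closed planar curve γ with K := k_ssss + k² k_ss − (1/2) k k_s², the energy E = (1/2)∫_γ k_s² ds satisfies E ≤ C L^{3/2} ‖K‖_{L²}, where C depends only on the winding number ω. -/
open Real MeasureTheory Complex

/-- The ideal-curve Euler–Lagrange operator `K = k_ssss + k² k_ss − ½ k k_s²`
for an arclength-parametrized curve with curvature `k`. -/
noncomputable def Kop1 (k : ℝ → ℝ) (s : ℝ) : ℝ :=
  iteratedDeriv 4 k s + (k s) ^ 2 * iteratedDeriv 2 k s - (1 / 2) * k s * (deriv k s) ^ 2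

noncomputable def toC : EuclideanSpace ℝ (Fin 2) →L[ℝ] ℂ :=
  Complex.ofRealCLM.comp (EuclideanSpace.proj 0) +
    Complex.I • (Complex.ofRealCLM.comp (EuclideanSpace.proj (1 : Fin 2)))

lemma toC_apply (p : EuclideanSpace ℝ (Fin 2)) : toC p = (p 0 : ℂ) + (p 1 : ℂ) * Complex.I := by
  simp [toC, mul_comm]

lemma norm_toC (p : EuclideanSpace ℝ (Fin 2)) : ‖toC p‖ = ‖p‖ := by
  rw [toC_apply, EuclideanSpace.norm_eq]
  rw [Complex.norm_def, Complex.normSq_apply]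
  simp [Fin.sum_univ_two, Real.norm_eq_abs, sq_abs]
  ring_nf

lemma toC_rot2 (p : EuclideanSpace ℝ (Fin 2)) : toC (rot2 p) = Complex.I * toC p := by
  have h0 : rot2 p 0 = -p 1 := rfl
  have h1 : rot2 p 1 = p 0 := rfl
  rw [toC_apply, toC_apply, h0, h1]
  push_cast
  simp [Complex.ext_iff]

lemma periodic_deriv {E : Type*} [NormedAddCommGroup E] [NormedSpace ℝ E]
    {f : ℝ → E} {c : ℝ} (hf : Function.Periodic f c) : Function.Periodic (deriv f) c := by
  intro x
  have : (fun y => f (y + c)) = f := funext hf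
  rw [← deriv_comp_add_const, this]

section Main
variable {γ : ℝ → EuclideanSpace ℝ (Fin 2)} {k : ℝ → ℝ} {L : ℝ}

lemma main_estimate (hL : 0 < L) (hγ : ContDiff ℝ (⊤ : ℕ∞) γ) (hk : ContDiff ℝ (⊤ : ℕ∞) k)
    (hper : Function.Periodic γ L)
    (hτ : ∀ s : ℝ, ‖deriv γ s‖ = 1)
    (hcurv : ∀ s : ℝ, deriv (deriv γ) s = k s • rot2 (deriv γ s)) :
    (3 / 2) * (∫ s in (0:ℝ)..L, (deriv k s) ^ 2) ≤
      L * Real.sqrt L * Real.sqrt (∫ s in (0:ℝ)..L, (Kop1 k s) ^ 2) := by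
  set T : ℝ → ℂ := fun s => toC (deriv γ s) with hTdef
  have hγ' : ContDiff ℝ (⊤ : ℕ∞) (deriv γ) := (contDiff_infty_iff_deriv.mp hγ).2
  have hTd : ∀ s, HasDerivAt T ((k s : ℂ) * (Complex.I * T s)) s := by
    intro s
    have h1 : HasDerivAt (deriv γ) (deriv (deriv γ) s) s :=
      ((hγ'.differentiable (by simp)) s).hasDerivAt
    have h2 : HasDerivAt T (toC (deriv (deriv γ) s)) s :=
      toC.hasFDerivAt.comp_hasDerivAt s h1
    have h3 : toC (deriv (deriv γ) s) = (k s : ℂ) * (Complex.I * T s) := by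
      rw [hcurv s, toC.map_smul, toC_rot2]
      simp [Complex.real_smul, hTdef]
    rwa [h3] at h2
  have hT1 : ∀ s, (starRingEnd ℂ) (T s) * T s = 1 := by
    intro s
    have : ‖T s‖ = 1 := by
      rw [hTdef, norm_toC]
      exact hτ s
    have h2 := Complex.normSq_eq_norm_sq (T s)
    rw [this] at h2
    rw [mul_comm, Complex.mul_conj, h2]
    norm_num
  have hTcont : Continuous T := toC.continuous.comp (hγ'.continuous)
  have hTper : Function.Periodic T L := fun s => by
    simp only [hTdef]; rw [periodic_deriv hper s]
  have hkper : Function.Periodic k L := by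
    have hF : ∀ s, k s = ((starRingEnd ℂ) (T s) * deriv T s).im := by
      intro s
      rw [(hTd s).deriv]
      have : (starRingEnd ℂ) (T s) * ((k s : ℂ) * (Complex.I * T s)) =
          (k s : ℂ) * Complex.I * ((starRingEnd ℂ) (T s) * T s) := by ring
      rw [this, hT1 s, mul_one]
      simp
    intro s
    rw [hF (s + L), hF s, hTper s, periodic_deriv hTper s]
  -- derivatives of k
  have h1le : (1 : WithTop ℕ∞) ≤ ((⊤:ℕ∞) : WithTop ℕ∞) := by exact_mod_cast le_top
  have hkn : ∀ n : ℕ, ContDiff ℝ ((⊤:ℕ∞) : WithTop ℕ∞) (iteratedDeriv n k) := by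
    intro n
    rw [iteratedDeriv_eq_iterate]
    exact hk.iterate_deriv n
  have hD : ∀ (n : ℕ) (s : ℝ), HasDerivAt (iteratedDeriv n k) (iteratedDeriv (n + 1) k s) s := by
    intro n s
    have := (((hkn n).differentiable (by simp)) s).hasDerivAt
    rwa [← iteratedDeriv_succ] at this
  have hDcont : ∀ n : ℕ, Continuous (iteratedDeriv n k) := fun n => (hkn n).continuous
  have hk1 : deriv k = iteratedDeriv 1 k := (iteratedDeriv_one).symm
  have hknper : ∀ n : ℕ, Function.Periodic (iteratedDeriv n k) L := by
    intro n
    induction n with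
    | zero => simpa [iteratedDeriv_zero] using hkper
    | succ n ih =>
      have : iteratedDeriv (n + 1) k = deriv (iteratedDeriv n k) := by
        funext t; rw [iteratedDeriv_succ]
      rw [this]
      exact periodic_deriv ih
  have hkc : Continuous k := hk.continuous
  have hD0 : ∀ s, HasDerivAt k (deriv k s) s := fun s => by
    have := hD 0 s; rwa [iteratedDeriv_zero, iteratedDeriv_one] at this
  have hD1 : ∀ s, HasDerivAt (deriv k) (iteratedDeriv 2 k s) s := fun s => by
    have := hD 1 s; rwa [iteratedDeriv_one] at this
  have hD2 : ∀ s, HasDerivAt (iteratedDeriv 2 k) (iteratedDeriv 3 k s) s := hD 2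
  have hD3 : ∀ s, HasDerivAt (iteratedDeriv 3 k) (iteratedDeriv 4 k s) s := hD 3
  have hdkc : Continuous (deriv k) := by rw [hk1]; exact hDcont 1
  set J := ∫ s in (0:ℝ)..L, (deriv k s) ^ 2 with hJdef
  have hint1 : IntervalIntegrable (fun s => deriv k s ^ 2) volume 0 L :=
    (hdkc.pow 2).intervalIntegrable 0 L
  have hint2 : IntervalIntegrable (fun s => k s * iteratedDeriv 2 k s) volume 0 L :=
    (hkc.mul (hDcont 2)).intervalIntegrable 0 L
  have hIBP : (∫ s in (0:ℝ)..L, (deriv k s ^ 2 + k s * iteratedDeriv 2 k s)) =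
      k L * deriv k L - k 0 * deriv k 0 := by
    apply intervalIntegral.integral_eq_sub_of_hasDerivAt
    · intro s _
      have h := (hD0 s).mul (hD1 s)
      have : deriv k s * deriv k s + k s * iteratedDeriv 2 k s
          = deriv k s ^ 2 + k s * iteratedDeriv 2 k s := by ring
      rwa [this] at h
    · exact hint1.add hint2
  have hbd : k L * deriv k L - k 0 * deriv k 0 = 0 := by
    have e1 : k L = k 0 := by simpa using (hkper 0)
    have e2 : deriv k L = deriv k 0 := by simpa using (periodic_deriv hkper 0)
    rw [e1, e2]; ring
  have hkk'' : (∫ s in (0:ℝ)..L, k s * iteratedDeriv 2 k s) = -J := by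
    have := (intervalIntegral.integral_add hint1 hint2).symm.trans (hIBP.trans hbd)
    linarith [this]
  have hNint : (∫ s in (0:ℝ)..L, (k s * iteratedDeriv 2 k s - 1 / 2 * deriv k s ^ 2))
      = -(3 / 2) * J := by
    rw [intervalIntegral.integral_sub hint2 (by
      simpa using hint1.const_mul (1/2 : ℝ))]
    rw [hkk'']
    rw [show (fun s => 1 / 2 * deriv k s ^ 2) = fun s => (1/2 : ℝ) * (deriv k s ^2) from rfl]
    rw [intervalIntegral.integral_const_mul]
    rw [← hJdef]; ring
  -- Q and its derivative
  set M : ℝ → ℝ := iteratedDeriv 3 k with hMdef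
  set Nf : ℝ → ℝ := fun s => k s * iteratedDeriv 2 k s - 1 / 2 * deriv k s ^ 2 with hNdef
  set Q : ℝ → ℂ := fun s => ((M s : ℂ) + (Nf s : ℂ) * Complex.I) * (starRingEnd ℂ) (T s) with hQdef
  have habsT : ∀ s, ‖T s‖ = 1 := by
    intro s; rw [hTdef, norm_toC]; exact hτ s
  have hconjTd : ∀ s, HasDerivAt (fun t => (starRingEnd ℂ) (T t))
      ((starRingEnd ℂ) ((k s : ℂ) * (Complex.I * T s))) s := by
    intro s
    have := Complex.conjCLE.toContinuousLinearMap.hasFDerivAt.comp_hasDerivAt s (hTd s)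
    simpa [Function.comp_def] using this
  have hNd : ∀ s, HasDerivAt Nf (k s * iteratedDeriv 3 k s) s := by
    intro s
    have h1 := (hD0 s).mul (hD2 s)
    have h2 := ((hD1 s).pow 2).const_mul (1 / 2 : ℝ)
    have h := h1.sub h2
    convert h using 1
    · rfl
    · rfl
    · rfl
    rw [hMdef]
    ring
  have hQd : ∀ s, HasDerivAt Q ((Kop1 k s : ℂ) * (starRingEnd ℂ) (T s)) s := by
    intro s
    have hMC : HasDerivAt (fun t => ((M t : ℝ) : ℂ)) (((iteratedDeriv 4 k s : ℝ) : ℂ)) s :=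
      (hD3 s).ofReal_comp
    have hNC : HasDerivAt (fun t => ((Nf t : ℝ) : ℂ)) (((k s * iteratedDeriv 3 k s : ℝ) : ℂ)) s :=
      (hNd s).ofReal_comp
    have h1 := (hMC.add (hNC.mul_const Complex.I)).mul (hconjTd s)
    convert h1 using 1
    · rfl
    · rfl
    simp only [map_mul, Complex.conj_ofReal, Complex.conj_I, Pi.add_apply]
    rw [Kop1, hNdef, hMdef]
    push_cast
    ring_nf
    rw [Complex.I_sq]
    ring
  have hKc : Continuous (Kop1 k) := by
    unfold Kop1
    exact ((hDcont 4).add ((hkc.pow 2).mul (hDcont 2))).sub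
      ((continuous_const.mul hkc).mul (hdkc.pow 2))
  have hQTcont : Continuous fun t => (Kop1 k t : ℂ) * (starRingEnd ℂ) (T t) :=
    (Complex.continuous_ofReal.comp hKc).mul (Complex.continuous_conj.comp hTcont)
  have hQFTC : ∀ s : ℝ, (∫ t in (0:ℝ)..s, (Kop1 k t : ℂ) * (starRingEnd ℂ) (T t)) = Q s - Q 0 :=
    fun s => intervalIntegral.integral_eq_sub_of_hasDerivAt (fun t _ => hQd t)
      (hQTcont.intervalIntegrable 0 s)
  -- closedness : integral of T vanishes
  have hγc : ∀ s, HasDerivAt (fun t => toC (γ t)) (T s) s := fun s =>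
    toC.hasFDerivAt.comp_hasDerivAt s ((hγ.differentiable (by simp) s).hasDerivAt)
  have hTint0 : (∫ s in (0:ℝ)..L, T s) = 0 := by
    rw [intervalIntegral.integral_eq_sub_of_hasDerivAt (fun s _ => hγc s)
      (hTcont.intervalIntegrable 0 L)]
    rw [show γ L = γ 0 by simpa using hper 0]
    exact sub_self _
  -- |∫ Nf| ≤ L * A
  set A := ∫ s in (0:ℝ)..L, |Kop1 k s| with hAdef
  have hA0 : 0 ≤ A := intervalIntegral.integral_nonneg hL.le (fun s _ => abs_nonneg _)
  have hKabsint : ∀ a b : ℝ, IntervalIntegrable (fun s => |Kop1 k s|) volume a b :=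
    fun a b => (hKc.abs).intervalIntegrable a b
  have hQbound : ∀ s ∈ Set.Icc (0:ℝ) L, ‖Q s - Q 0‖ ≤ A := by
    intro s hs
    rw [← hQFTC s]
    calc ‖∫ t in (0:ℝ)..s, (Kop1 k t : ℂ) * (starRingEnd ℂ) (T t)‖
        ≤ ∫ t in (0:ℝ)..s, ‖(Kop1 k t : ℂ) * (starRingEnd ℂ) (T t)‖ :=
          intervalIntegral.norm_integral_le_integral_norm hs.1
      _ = ∫ t in (0:ℝ)..s, |Kop1 k t| := by
          apply intervalIntegral.integral_congr
          intro t _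
          show ‖(Kop1 k t : ℂ) * (starRingEnd ℂ) (T t)‖ = |Kop1 k t|
          rw [norm_mul, RCLike.norm_conj, habsT t, mul_one, Complex.norm_real,
            Real.norm_eq_abs]
      _ ≤ A := by
          rw [hAdef, ← intervalIntegral.integral_add_adjacent_intervals (b := s)
            (hKabsint 0 s) (hKabsint s L)]
          have : 0 ≤ ∫ t in s..L, |Kop1 k t| :=
            intervalIntegral.integral_nonneg hs.2 (fun t _ => abs_nonneg _)
          linarith
  have hQcont : Continuous Q := by
    apply Continuous.mul
    · exact (Complex.continuous_ofReal.comp (hDcont 3)).add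
        ((Complex.continuous_ofReal.comp
          ((hkc.mul (hDcont 2)).sub (continuous_const.mul (hdkc.pow 2)))).mul continuous_const)
    · exact Complex.continuous_conj.comp hTcont
  have hQT : ∀ s, Q s * T s = (M s : ℂ) + (Nf s : ℂ) * Complex.I := by
    intro s
    calc Q s * T s = ((M s : ℂ) + (Nf s : ℂ) * Complex.I) * ((starRingEnd ℂ) (T s) * T s) := by
          rw [hQdef]; ring
      _ = (M s : ℂ) + (Nf s : ℂ) * Complex.I := by rw [hT1 s, mul_one]
  have hsplitQ : (∫ s in (0:ℝ)..L, Q s * T s) = ∫ s in (0:ℝ)..L, (Q s - Q 0) * T s := by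
    have heq : ∀ s, Q s * T s = (Q s - Q 0) * T s + Q 0 * T s := fun s => by ring
    rw [intervalIntegral.integral_congr (g := fun s => (Q s - Q 0) * T s + Q 0 * T s)
      (fun s _ => heq s)]
    rw [intervalIntegral.integral_add (f := fun s => (Q s - Q 0) * T s) (g := fun s => Q 0 * T s)
      (((hQcont.sub continuous_const).mul hTcont).intervalIntegrable 0 L)
      ((continuous_const.mul hTcont).intervalIntegrable 0 L)]
    rw [intervalIntegral.integral_const_mul, hTint0, mul_zero, add_zero]
  have hnormQT : ‖∫ s in (0:ℝ)..L, (Q s - Q 0) * T s‖ ≤ L * A := by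
    calc ‖∫ s in (0:ℝ)..L, (Q s - Q 0) * T s‖
        ≤ ∫ s in (0:ℝ)..L, ‖(Q s - Q 0) * T s‖ :=
          intervalIntegral.norm_integral_le_integral_norm hL.le
      _ ≤ ∫ s in (0:ℝ)..L, A := by
          apply intervalIntegral.integral_mono_on hL.le
            (((hQcont.sub continuous_const).mul hTcont).norm.intervalIntegrable 0 L)
            intervalIntegrable_const
          intro s hs
          show ‖(Q s - Q 0) * T s‖ ≤ A
          rw [norm_mul, habsT s, mul_one]
          exact hQbound s hs
      _ = L * A := by simp [mul_comm]
  have hMint : (∫ s in (0:ℝ)..L, (M s : ℂ)) = ((∫ s in (0:ℝ)..L, M s : ℝ) : ℂ) :=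
    intervalIntegral.integral_ofReal
  have hQTint : (∫ s in (0:ℝ)..L, Q s * T s)
      = ((∫ s in (0:ℝ)..L, M s : ℝ) : ℂ) + ((∫ s in (0:ℝ)..L, Nf s : ℝ) : ℂ) * Complex.I := by
    rw [intervalIntegral.integral_congr (g := fun s => (M s : ℂ) + (Nf s : ℂ) * Complex.I)
      (fun s _ => hQT s)]
    have hMCc : Continuous fun s : ℝ => ((M s : ℝ) : ℂ) :=
      Complex.continuous_ofReal.comp (hDcont 3)
    have hNfCc : Continuous fun s : ℝ => ((Nf s : ℝ) : ℂ) * Complex.I :=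
      (Complex.continuous_ofReal.comp
        ((hkc.mul (hDcont 2)).sub (continuous_const.mul (hdkc.pow 2)))).mul continuous_const
    rw [intervalIntegral.integral_add
      (hMCc.intervalIntegrable 0 L) (hNfCc.intervalIntegrable 0 L)]
    rw [intervalIntegral.integral_mul_const, hMint, intervalIntegral.integral_ofReal]
  have habsN : |∫ s in (0:ℝ)..L, Nf s| ≤ L * A := by
    calc |∫ s in (0:ℝ)..L, Nf s| = |(∫ s in (0:ℝ)..L, Q s * T s).im| := by
          rw [hQTint]; simp
      _ ≤ ‖∫ s in (0:ℝ)..L, Q s * T s‖ := Complex.abs_im_le_norm _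
      _ = ‖∫ s in (0:ℝ)..L, (Q s - Q 0) * T s‖ := by rw [← hsplitQ]
      _ ≤ L * A := hnormQT
  have hNint2 : (∫ s in (0:ℝ)..L, Nf s) = -(3 / 2) * J := hNint
  -- Cauchy-Schwarz
  set B := ∫ s in (0:ℝ)..L, (Kop1 k s) ^ 2 with hBdef
  have hB0 : 0 ≤ B := intervalIntegral.integral_nonneg hL.le (fun s _ => sq_nonneg _)
  have hCS : A ^ 2 ≤ L * B := by
    have hexp : (∫ s in (0:ℝ)..L, (|Kop1 k s| - A / L) ^ 2) = B - A ^ 2 / L := by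
      have heq : ∀ s, (|Kop1 k s| - A / L) ^ 2
          = (Kop1 k s) ^ 2 - (2 * A / L) * |Kop1 k s| + (A / L) ^ 2 := by
        intro s; rw [sub_sq, _root_.sq_abs]; ring
      rw [intervalIntegral.integral_congr
        (g := fun s => (Kop1 k s) ^ 2 - (2 * A / L) * |Kop1 k s| + (A / L) ^ 2)
        (fun s _ => heq s)]
      rw [intervalIntegral.integral_add (f := fun s => (Kop1 k s) ^ 2 - (2 * A / L) * |Kop1 k s|)
        (g := fun _ => (A / L) ^ 2)
        ((((hKc.pow 2).sub (continuous_const.mul hKc.abs))).intervalIntegrable 0 L)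
        intervalIntegrable_const]
      rw [intervalIntegral.integral_sub (f := fun s => (Kop1 k s) ^ 2) (g := fun s => (2 * A / L) * |Kop1 k s|)
        ((hKc.pow 2).intervalIntegrable 0 L)
        ((continuous_const.mul hKc.abs).intervalIntegrable 0 L)]
      rw [intervalIntegral.integral_const_mul, intervalIntegral.integral_const]
      rw [← hBdef, ← hAdef]
      field_simp [hL.ne', smul_eq_mul]
      ring_nf
      rw [show L ^ 2 * A ^ 2 * L⁻¹ ^ 2 = A ^ 2 by field_simp [hL.ne']]
      ring
    have hpos : 0 ≤ B - A ^ 2 / L := hexp ▸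
      intervalIntegral.integral_nonneg hL.le (fun s _ => sq_nonneg _)
    have := mul_le_mul_of_nonneg_left (le_of_sub_nonneg hpos) hL.le
    calc A ^ 2 = L * (A ^ 2 / L) := by field_simp
      _ ≤ L * B := by
          apply mul_le_mul_of_nonneg_left _ hL.le
          linarith
  have hAle : A ≤ Real.sqrt L * Real.sqrt B := by
    calc A = Real.sqrt (A ^ 2) := (Real.sqrt_sq hA0).symm
      _ ≤ Real.sqrt (L * B) := Real.sqrt_le_sqrt hCS
      _ = Real.sqrt L * Real.sqrt B := Real.sqrt_mul hL.le B
  -- conclusion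
  have hfin : (3 / 2) * J ≤ L * A := by
    have h1 : (3 / 2) * J = -(∫ s in (0:ℝ)..L, Nf s) := by rw [hNint2]; ring
    have h2 := neg_le_abs (∫ s in (0:ℝ)..L, Nf s)
    linarith
  calc (3 / 2) * J ≤ L * A := hfin
    _ ≤ L * (Real.sqrt L * Real.sqrt B) := mul_le_mul_of_nonneg_left hAle hL.le
    _ = L * Real.sqrt L * Real.sqrt B := by ring

end Main

/-- For any smooth closed planar curve with winding number `ω` the
energy `E = ½∫ k_s² ds` satisfies `E ≤ C L^{3/2} ‖K‖₂`, with `C` depending only on `ω`. -/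
theorem energy_bounded_by_EL_operator (ω : ℕ) :
    ∃ C : ℝ, 0 < C ∧
      ∀ (γ : ℝ → EuclideanSpace ℝ (Fin 2)) (k : ℝ → ℝ) (L : ℝ),
        0 < L → ContDiff ℝ (⊤ : ℕ∞) γ → ContDiff ℝ (⊤ : ℕ∞) k →
        Function.Periodic γ L →
        (∀ s : ℝ, ‖deriv γ s‖ = 1) →
        (∀ s : ℝ, deriv (deriv γ) s = k s • rot2 (deriv γ s)) →
        (∫ s in (0:ℝ)..L, k s) = 2 * π * ω →
        (1 / 2) * (∫ s in (0:ℝ)..L, (deriv k s) ^ 2) ≤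
          C * L ^ ((3:ℝ) / 2) * Real.sqrt (∫ s in (0:ℝ)..L, (Kop1 k s) ^ 2) := by
  refine ⟨1, one_pos, ?_⟩
  intro γ k L hL hγ hk hper hτ hcurv _
  have hmain := main_estimate hL (hγ.of_le (by simp)) (hk.of_le (by simp)) hper hτ hcurv
  have hJ0 : 0 ≤ ∫ s in (0:ℝ)..L, (deriv k s) ^ 2 :=
    intervalIntegral.integral_nonneg hL.le (fun s _ => sq_nonneg _)
  have hrpow : L ^ ((3:ℝ) / 2) = L * Real.sqrt L := by
    rw [show ((3:ℝ) / 2) = 1 + 1 / 2 by norm_num, Real.rpow_add hL, Real.rpow_one,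
      ← Real.sqrt_eq_rpow]
  rw [hrpow, one_mul]
  nlinarith [hmain, hJ0]
end

section
/- For a smooth closed curve with winding number ω, curvature k, tangential angle θ, and energy E = (1/2)∫_γ k_s² ds, the ±ω-th Fourier coefficients of k satisfy |a_{±ω}| ≤ 2L²E. -/
open Real MeasureTheory

lemma expI_lip (a b : ℝ) : ‖Complex.exp (a * Complex.I) - Complex.exp (b * Complex.I)‖ ≤ |a - b| := by
  have key : ∀ x : ℝ, x ∈ Set.univ → HasDerivWithinAt (fun t : ℝ => Complex.exp (t * Complex.I))
      (Complex.exp (x * Complex.I) * (1 * Complex.I)) Set.univ x := by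
    intro x _
    exact (((hasDerivAt_id x).ofReal_comp.mul_const Complex.I).cexp).hasDerivWithinAt
  have := Convex.norm_image_sub_le_of_norm_hasDerivWithin_le key
    (C := 1) (fun x _ => by simp [Complex.norm_exp_ofReal_mul_I])
    convex_univ (Set.mem_univ b) (Set.mem_univ a)
  simpa [Real.norm_eq_abs] using this

lemma sq_integral_le (g : ℝ → ℝ) (L : ℝ) (hL : 0 < L) (hg : Continuous g)
    (hg0 : ∀ s, 0 ≤ g s) :
    (∫ s in (0:ℝ)..L, g s) ^ 2 ≤ L * ∫ s in (0:ℝ)..L, (g s) ^ 2 := by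
  set I1 := ∫ s in (0:ℝ)..L, g s with hI1
  set I2 := ∫ s in (0:ℝ)..L, (g s) ^ 2 with hI2
  have hI1nn : 0 ≤ I1 := intervalIntegral.integral_nonneg hL.le (fun u _ => hg0 u)
  have hI2nn : 0 ≤ I2 := intervalIntegral.integral_nonneg hL.le (fun u _ => sq_nonneg _)
  have hbound : ∀ lam : ℝ, 0 < lam → I1 ≤ (lam * I2 + L / lam) / 2 := by
    intro lam hlam
    have hmono : I1 ≤ ∫ s in (0:ℝ)..L, (lam * (g s)^2 + 1/lam) / 2 := by
      apply intervalIntegral.integral_mono_on hL.le (hg.intervalIntegrable 0 L)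
        (((continuous_const.mul (hg.pow 2)).add continuous_const).div_const 2 |>.intervalIntegrable 0 L)
      intro x _
      show g x ≤ (lam * (g x)^2 + 1/lam) / 2
      have h1 : lam * (1/lam) = 1 := by field_simp
      nlinarith [sq_nonneg (lam * g x - 1), hg0 x, hlam]
    calc I1 ≤ ∫ s in (0:ℝ)..L, (lam * (g s)^2 + 1/lam) / 2 := hmono
      _ = (lam * I2 + L / lam) / 2 := by
          rw [intervalIntegral.integral_div, intervalIntegral.integral_add
            (show IntervalIntegrable (fun s => lam * (g s)^2) volume 0 L from
              (continuous_const.mul (hg.pow 2)).intervalIntegrable 0 L)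
            (continuous_const.intervalIntegrable 0 L),
            intervalIntegral.integral_const_mul, intervalIntegral.integral_const]
          simp [smul_eq_mul]
          ring
  by_contra hcon
  push_neg at hcon
  have hI1pos : 0 < I1 := by nlinarith
  rcases eq_or_lt_of_le hI2nn with h0 | hI2pos
  · have key := hbound (L/I1) (by positivity)
    rw [← h0] at key
    have he : L/(L/I1) = I1 := by field_simp
    rw [he] at key
    linarith
  have key := hbound (I1/I2) (by positivity)
  have h1 : (I1/I2) * I2 = I1 := div_mul_cancel₀ _ hI2pos.ne'
  have h2 : L / (I1/I2) = L * I2 / I1 := by field_simp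
  rw [h1, h2] at key
  have h3 : I1 ≤ L * I2 / I1 := by linarith
  have h4 : I1 * I1 ≤ L * I2 := (le_div_iff₀ hI1pos).mp h3
  nlinarith


theorem fourier_aux (θ : ℝ → ℝ) (L : ℝ) (ω : ℕ) (hL : 0 < L) (hθ : ContDiff ℝ (⊤ : ℕ∞) θ)
    (hwind : θ L = θ 0 + 2 * π * ω)
    (hclosedx : (∫ s in (0:ℝ)..L, Real.cos (θ s)) = 0)
    (hclosedy : (∫ s in (0:ℝ)..L, Real.sin (θ s)) = 0)
    (ε : ℝ) (hε : ε = 1 ∨ ε = -1) :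
    ‖∫ s in (0:ℝ)..L, ((deriv θ s : ℝ) : ℂ) *
        Complex.exp ((ε:ℂ) * Complex.I * ((2 * π * (ω:ℝ) * s / L : ℝ) : ℂ))‖
      ≤ L^2 * (∫ u in (0:ℝ)..L, |deriv (deriv θ) u|)^2 := by
  have hθ' : ContDiff ℝ ((⊤:ℕ∞):WithTop ℕ∞) θ := hθ.of_le (by simp)
  have hθd : Differentiable ℝ θ := hθ'.differentiable (by simp)
  have hkC : ContDiff ℝ ((⊤:ℕ∞):WithTop ℕ∞) (deriv θ) := (contDiff_infty_iff_deriv.mp hθ').2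
  have hkd : Differentiable ℝ (deriv θ) := hkC.differentiable (by simp)
  have hkc : Continuous (deriv θ) := hkd.continuous
  have hk'c : Continuous (deriv (deriv θ)) := ((contDiff_infty_iff_deriv.mp hkC).2).continuous
  set M := ∫ u in (0:ℝ)..L, |deriv (deriv θ) u| with hM
  have hMnn : 0 ≤ M := intervalIntegral.integral_nonneg hL.le fun u _ => abs_nonneg _
  -- pairwise bound on deriv θ
  have hpair : ∀ s ∈ Set.Icc (0:ℝ) L, ∀ t ∈ Set.Icc (0:ℝ) L, |deriv θ s - deriv θ t| ≤ M := by
    intro s hs t ht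
    have heq : deriv θ s - deriv θ t = ∫ u in t..s, deriv (deriv θ) u :=
      (intervalIntegral.integral_eq_sub_of_hasDerivAt
        (fun u _ => (hkd u).hasDerivAt) (hk'c.intervalIntegrable t s)).symm
    rw [← Real.norm_eq_abs, heq]
    calc ‖∫ u in t..s, deriv (deriv θ) u‖ ≤ |∫ u in t..s, ‖deriv (deriv θ) u‖| :=
          intervalIntegral.norm_integral_le_abs_integral_norm
      _ ≤ |∫ u in (0:ℝ)..L, ‖deriv (deriv θ) u‖| := by
          apply intervalIntegral.abs_integral_mono_interval ?_
            (Filter.Eventually.of_forall fun u => norm_nonneg _)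
            ((hk'c.norm).intervalIntegrable 0 L)
          rw [Set.uIoc, Set.uIoc_of_le hL.le]
          exact Set.Ioc_subset_Ioc (le_min ht.1 hs.1 : (0:ℝ) ≤ _) (max_le ht.2 hs.2)
      _ = M := by
          rw [abs_of_nonneg (intervalIntegral.integral_nonneg hL.le fun u _ => norm_nonneg _)]
          simp [hM, Real.norm_eq_abs]
  -- Rolle: deriv θ attains the value c
  set c := 2 * π * (ω:ℝ) / L with hc
  have hderivg : ∀ s : ℝ, deriv (fun s => θ s - c * s) s = deriv θ s - c := by
    intro s
    have h := ((hθd s).hasDerivAt.sub ((hasDerivAt_id s).const_mul c)).deriv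
    exact h.trans (by ring)
  obtain ⟨t0, ht0, hgt0⟩ : ∃ t ∈ Set.Ioo (0:ℝ) L, deriv (fun s => θ s - c * s) t = 0 := by
    apply exists_deriv_eq_zero hL
      ((hθ.continuous.sub (continuous_const.mul continuous_id)).continuousOn)
    have hcL : c * L = 2 * π * ω := by rw [hc, div_mul_cancel₀ _ hL.ne']
    show θ 0 - c * 0 = θ L - c * L
    rw [hwind, hcL]
    ring
  have hct0 : deriv θ t0 = c := by
    have := hderivg t0
    rw [this] at hgt0
    linarith
  have hA : ∀ s ∈ Set.Icc (0:ℝ) L, |deriv θ s - c| ≤ M := by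
    intro s hs
    have := hpair s hs t0 ⟨ht0.1.le, ht0.2.le⟩
    rwa [hct0] at this
  -- angle bound
  have hB : ∀ s ∈ Set.Icc (0:ℝ) L, |(θ s - θ 0) - c * s| ≤ L * M := by
    intro s hs
    have heq : θ s - θ 0 = ∫ u in (0:ℝ)..s, deriv θ u :=
      (intervalIntegral.integral_eq_sub_of_hasDerivAt
        (fun u _ => (hθd u).hasDerivAt) (hkc.intervalIntegrable 0 s)).symm
    have heq2 : c * s = ∫ u in (0:ℝ)..s, c := by
      rw [intervalIntegral.integral_const, smul_eq_mul, sub_zero, mul_comm]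
    rw [heq, heq2, ← intervalIntegral.integral_sub (hkc.intervalIntegrable 0 s)
      (intervalIntegrable_const), ← Real.norm_eq_abs]
    have hbd := intervalIntegral.norm_integral_le_of_norm_le_const
      (C := M) (f := fun u => deriv θ u - c) (a := 0) (b := s) ?_
    · calc ‖∫ u in (0:ℝ)..s, (deriv θ u - c)‖ ≤ M * |s - 0| := hbd
        _ ≤ M * L := by
            rw [sub_zero, abs_of_nonneg hs.1]
            exact mul_le_mul_of_nonneg_left hs.2 hMnn
        _ = L * M := mul_comm _ _
    · intro u hu
      rw [Set.uIoc_of_le hs.1] at hu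
      simpa [Real.norm_eq_abs] using hA u ⟨hu.1.le, hu.2.trans hs.2⟩
  -- Complex part
  set σ : ℂ := (ε:ℂ) * Complex.I with hσ
  have hσsq : σ * σ = -1 := by
    rcases hε with h | h <;> subst h <;>
      simp [hσ, mul_mul_mul_comm, Complex.I_mul_I]
  have hσne : σ ≠ 0 := by
    rcases hε with h | h <;> subst h <;> simp [hσ, Complex.I_ne_zero]
  have hexp1 : Complex.exp (σ * ((2 * π * (ω:ℝ) : ℝ) : ℂ)) = 1 := by
    rcases hε with h | h <;> subst h
    · have h2 := Complex.exp_int_mul_two_pi_mul_I (ω:ℤ)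
      rw [← h2]
      congr 1
      push_cast [hσ]
      ring
    · have h2 := Complex.exp_int_mul_two_pi_mul_I (-(ω:ℤ))
      rw [← h2]
      congr 1
      push_cast [hσ]
      ring
  have hcexpθ : Continuous (fun s => Complex.exp (σ * ((θ s : ℝ) : ℂ))) :=
    Complex.continuous_exp.comp (continuous_const.mul (Complex.continuous_ofReal.comp hθ.continuous))
  have hC1 : (∫ s in (0:ℝ)..L, ((deriv θ s : ℝ) : ℂ) * Complex.exp (σ * ((θ s : ℝ) : ℂ))) = 0 := by
    have hd : ∀ s ∈ Set.uIcc (0:ℝ) L, HasDerivAt (fun s => -σ * Complex.exp (σ * ((θ s:ℝ):ℂ)))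
        (((deriv θ s : ℝ) : ℂ) * Complex.exp (σ * ((θ s : ℝ) : ℂ))) s := by
      intro s _
      have h1 : HasDerivAt (fun s : ℝ => ((θ s : ℝ) : ℂ)) ((deriv θ s : ℝ) : ℂ) s :=
        (hθd s).hasDerivAt.ofReal_comp
      have h2 := ((h1.const_mul σ).cexp).const_mul (-σ)
      refine h2.congr_deriv ?_
      rw [show -σ * (Complex.exp (σ * ((θ s:ℝ):ℂ)) * (σ * ((deriv θ s : ℝ):ℂ)))
        = -(σ*σ) * (((deriv θ s:ℝ):ℂ) * Complex.exp (σ * ((θ s:ℝ):ℂ))) by ring, hσsq]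
      ring
    rw [intervalIntegral.integral_eq_sub_of_hasDerivAt hd
      (((Complex.continuous_ofReal.comp hkc).mul hcexpθ).intervalIntegrable 0 L)]
    have harg : (((θ L : ℝ)) : ℂ) = ((θ 0 : ℝ) : ℂ) + ((2*π*(ω:ℝ) : ℝ) : ℂ) := by
      rw [hwind]; push_cast; ring
    rw [harg, mul_add, Complex.exp_add, hexp1, mul_one]
    ring
  have hC2 : (∫ s in (0:ℝ)..L, Complex.exp (σ * ((θ s : ℝ) : ℂ))) = 0 := by
    have hpt : ∀ x : ℝ, Complex.exp (σ * (x:ℂ))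
        = ((Real.cos x : ℝ) : ℂ) + σ * ((Real.sin x : ℝ) : ℂ) := by
      intro x
      rw [show σ * (x:ℂ) = ((ε*x : ℝ):ℂ) * Complex.I by push_cast [hσ]; ring,
        Complex.exp_mul_I, ← Complex.ofReal_cos, ← Complex.ofReal_sin]
      rcases hε with h | h <;> subst h <;>
        push_cast [hσ] <;> simp [Complex.cos_neg, Complex.sin_neg] <;> ring
    calc (∫ s in (0:ℝ)..L, Complex.exp (σ * ((θ s : ℝ) : ℂ)))
        = ∫ s in (0:ℝ)..L, (((Real.cos (θ s) : ℝ) : ℂ) + σ * ((Real.sin (θ s) : ℝ) : ℂ)) :=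
          intervalIntegral.integral_congr fun s _ => hpt (θ s)
      _ = (((∫ s in (0:ℝ)..L, Real.cos (θ s) : ℝ)) : ℂ)
          + σ * (((∫ s in (0:ℝ)..L, Real.sin (θ s) : ℝ)) : ℂ) := by
          have hcc : Continuous (fun s => ((Real.cos (θ s):ℝ):ℂ)) :=
            Complex.continuous_ofReal.comp (Real.continuous_cos.comp hθ.continuous)
          have hsc : Continuous (fun s => σ * ((Real.sin (θ s):ℝ):ℂ)) :=
            continuous_const.mul
              (Complex.continuous_ofReal.comp (Real.continuous_sin.comp hθ.continuous))
          have hic : IntervalIntegrable (fun s => ((Real.cos (θ s):ℝ):ℂ)) volume 0 L :=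
            hcc.intervalIntegrable 0 L
          have his : IntervalIntegrable (fun s => σ * ((Real.sin (θ s):ℝ):ℂ)) volume 0 L :=
            hsc.intervalIntegrable 0 L
          rw [intervalIntegral.integral_add hic his,
            intervalIntegral.integral_const_mul, intervalIntegral.integral_ofReal,
            intervalIntegral.integral_ofReal]
      _ = 0 := by rw [hclosedx, hclosedy]; simp
  -- step D
  have hexpe1c : Continuous (fun s : ℝ => Complex.exp (σ * ((c * s : ℝ) : ℂ))) :=
    Complex.continuous_exp.comp (continuous_const.mul
      (Complex.continuous_ofReal.comp (continuous_const.mul continuous_id)))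
  have hD : (c : ℂ) * (∫ s in (0:ℝ)..L, Complex.exp (σ * ((c * s : ℝ) : ℂ))) = 0 := by
    rcases Nat.eq_zero_or_pos ω with hω | hω
    · have h0 : c = 0 := by simp [hc, hω]
      rw [h0]
      simp
    · have hcpos : (0:ℝ) < c := by
        have hω' : 0 < (ω:ℝ) := by exact_mod_cast hω
        rw [hc]
        positivity
      have hσc : σ * (c:ℂ) ≠ 0 := mul_ne_zero hσne (by exact_mod_cast hcpos.ne')
      suffices h : (∫ s in (0:ℝ)..L, Complex.exp (σ * ((c*s:ℝ):ℂ))) = 0 by rw [h, mul_zero]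
      have hd : ∀ s ∈ Set.uIcc (0:ℝ) L, HasDerivAt
          (fun s => (σ * c)⁻¹ * Complex.exp (σ * ((c*s:ℝ):ℂ)))
          (Complex.exp (σ * ((c*s:ℝ):ℂ))) s := by
        intro s _
        have h0 : HasDerivAt (fun s : ℝ => c * s) c s := by
          simpa using (hasDerivAt_id s).const_mul c
        have h2 := ((h0.ofReal_comp.const_mul σ).cexp).const_mul (σ * (c:ℂ))⁻¹
        refine h2.congr_deriv ?_
        rw [mul_comm, mul_assoc, mul_inv_cancel₀ hσc, mul_one]
      rw [intervalIntegral.integral_eq_sub_of_hasDerivAt hd (hexpe1c.intervalIntegrable 0 L)]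
      have h3 : ((c * L : ℝ) : ℂ) = ((2*π*(ω:ℝ) : ℝ):ℂ) := by
        norm_cast
        rw [hc, div_mul_cancel₀ _ hL.ne']
      rw [h3, hexp1]
      simp
  -- step E: rewrite the main integral
  set K := Complex.exp (-σ * ((θ 0 : ℝ):ℂ)) with hK
  have he2 : ∀ s : ℝ, Complex.exp (σ * ((θ s - θ 0 : ℝ):ℂ))
      = K * Complex.exp (σ * ((θ s:ℝ):ℂ)) := by
    intro s
    rw [hK, ← Complex.exp_add]
    congr 1
    push_cast
    ring
  have hi1 : Continuous (fun s => ((deriv θ s:ℝ):ℂ) * Complex.exp (σ * ((c*s:ℝ):ℂ))) :=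
    (Complex.continuous_ofReal.comp hkc).mul hexpe1c
  have hi2 : Continuous (fun s => (c:ℂ) * Complex.exp (σ * ((c*s:ℝ):ℂ))) :=
    continuous_const.mul hexpe1c
  have hi3 : Continuous (fun s => K * (((deriv θ s:ℝ):ℂ) * Complex.exp (σ * ((θ s:ℝ):ℂ)))) :=
    continuous_const.mul ((Complex.continuous_ofReal.comp hkc).mul hcexpθ)
  have hi4 : Continuous (fun s => ((c:ℂ) * K) * Complex.exp (σ * ((θ s:ℝ):ℂ))) :=
    continuous_const.mul hcexpθ
  have key : (∫ s in (0:ℝ)..L, (((deriv θ s:ℝ):ℂ) - c) *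
        (Complex.exp (σ * ((c*s:ℝ):ℂ)) - Complex.exp (σ * ((θ s - θ 0:ℝ):ℂ))))
      = ∫ s in (0:ℝ)..L, ((deriv θ s:ℝ):ℂ) * Complex.exp (σ * ((c*s:ℝ):ℂ)) := by
    calc (∫ s in (0:ℝ)..L, (((deriv θ s:ℝ):ℂ) - c) *
        (Complex.exp (σ * ((c*s:ℝ):ℂ)) - Complex.exp (σ * ((θ s - θ 0:ℝ):ℂ))))
        = ∫ s in (0:ℝ)..L, (((deriv θ s:ℝ):ℂ) * Complex.exp (σ * ((c*s:ℝ):ℂ))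
            - (c:ℂ) * Complex.exp (σ * ((c*s:ℝ):ℂ))
            - K * (((deriv θ s:ℝ):ℂ) * Complex.exp (σ * ((θ s:ℝ):ℂ)))
            + ((c:ℂ) * K) * Complex.exp (σ * ((θ s:ℝ):ℂ))) := by
          apply intervalIntegral.integral_congr
          intro s _
          beta_reduce
          rw [he2 s]
          ring
      _ = ((∫ s in (0:ℝ)..L, ((deriv θ s:ℝ):ℂ) * Complex.exp (σ * ((c*s:ℝ):ℂ)))
            - ∫ s in (0:ℝ)..L, (c:ℂ) * Complex.exp (σ * ((c*s:ℝ):ℂ)))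
            - (∫ s in (0:ℝ)..L, K * (((deriv θ s:ℝ):ℂ) * Complex.exp (σ * ((θ s:ℝ):ℂ))))
            + ∫ s in (0:ℝ)..L, ((c:ℂ) * K) * Complex.exp (σ * ((θ s:ℝ):ℂ)) := by
          rw [intervalIntegral.integral_add (((hi1.intervalIntegrable 0 L).sub (hi2.intervalIntegrable 0 L)).sub (hi3.intervalIntegrable 0 L))
              (hi4.intervalIntegrable 0 L),
            intervalIntegral.integral_sub ((hi1.intervalIntegrable 0 L).sub (hi2.intervalIntegrable 0 L))
              (hi3.intervalIntegrable 0 L),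
            intervalIntegral.integral_sub (hi1.intervalIntegrable 0 L)
              (hi2.intervalIntegrable 0 L)]
      _ = ∫ s in (0:ℝ)..L, ((deriv θ s:ℝ):ℂ) * Complex.exp (σ * ((c*s:ℝ):ℂ)) := by
          rw [intervalIntegral.integral_const_mul, intervalIntegral.integral_const_mul,
            intervalIntegral.integral_const_mul, hC1, hC2, hD]
          ring
  -- final bound
  have hargeq : (∫ s in (0:ℝ)..L, ((deriv θ s : ℝ) : ℂ)
        * Complex.exp (σ * ((2 * π * (ω:ℝ) * s / L : ℝ) : ℂ)))
      = ∫ s in (0:ℝ)..L, ((deriv θ s:ℝ):ℂ) * Complex.exp (σ * ((c*s:ℝ):ℂ)) := by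
    apply intervalIntegral.integral_congr
    intro s _
    beta_reduce
    rw [show (2 * π * (ω:ℝ) * s / L : ℝ) = c * s by rw [hc]; ring]
  rw [hargeq, ← key]
  have hbd : ∀ s ∈ Set.uIoc (0:ℝ) L, ‖(((deriv θ s:ℝ):ℂ) - c) *
      (Complex.exp (σ * ((c*s:ℝ):ℂ)) - Complex.exp (σ * ((θ s - θ 0:ℝ):ℂ)))‖ ≤ M * (L * M) := by
    intro s hs
    rw [Set.uIoc_of_le hL.le] at hs
    have hs' : s ∈ Set.Icc (0:ℝ) L := ⟨hs.1.le, hs.2⟩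
    rw [norm_mul]
    have h1 : ‖((deriv θ s:ℝ):ℂ) - (c:ℂ)‖ = |deriv θ s - c| := by
      rw [show ((deriv θ s:ℝ):ℂ) - (c:ℂ) = ((deriv θ s - c : ℝ):ℂ) by push_cast; ring,
        Complex.norm_real, Real.norm_eq_abs]
    have h2 : ‖Complex.exp (σ * ((c*s:ℝ):ℂ)) - Complex.exp (σ * ((θ s - θ 0:ℝ):ℂ))‖ ≤ L * M := by
      rw [show σ * ((c*s:ℝ):ℂ) = ((ε*(c*s):ℝ):ℂ) * Complex.I by push_cast [hσ]; ring,
        show σ * ((θ s - θ 0:ℝ):ℂ) = ((ε*(θ s - θ 0):ℝ):ℂ) * Complex.I by push_cast [hσ]; ring]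
      refine (expI_lip _ _).trans ?_
      have hε1 : |ε| = 1 := by rcases hε with h | h <;> subst h <;> norm_num
      rw [← mul_sub, abs_mul, hε1, one_mul, abs_sub_comm]
      exact hB s hs'
    have h3 : ‖((deriv θ s:ℝ):ℂ) - (c:ℂ)‖ ≤ M := by
      rw [h1]
      exact hA s hs'
    exact mul_le_mul h3 h2 (norm_nonneg _) hMnn
  have hfin := intervalIntegral.norm_integral_le_of_norm_le_const hbd
  have heq : M * (L * M) * |L - 0| = L^2 * M^2 := by
    rw [sub_zero, abs_of_nonneg hL.le]
    ring
  exact hfin.trans (le_of_eq heq)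

/-- For a smooth closed curve with winding number `ω`, tangential
angle `θ` (so curvature `k = θ_s`), and energy `E = ½∫ k_s² ds`, the `±ω`-th Fourier
coefficients `a_{±ω} = (1/L)∫ k e^{∓i2πωs/L} ds` of the curvature satisfy
`|a_{±ω}| ≤ 2L²E`. -/
theorem fourier_coefficient_estimate (θ : ℝ → ℝ) (L : ℝ) (ω : ℕ)
    (hL : 0 < L) (hθ : ContDiff ℝ (⊤ : ℕ∞) θ)
    (hwind : ∀ s : ℝ, θ (s + L) = θ s + 2 * π * ω)
    (hclosedx : (∫ s in (0:ℝ)..L, Real.cos (θ s)) = 0)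
    (hclosedy : (∫ s in (0:ℝ)..L, Real.sin (θ s)) = 0) :
    ‖(1 / (L:ℂ)) * ∫ s in (0:ℝ)..L,
        ((deriv θ s : ℝ) : ℂ) * Complex.exp (-Complex.I * ((2 * π * (ω:ℝ) * s / L : ℝ) : ℂ))‖
      ≤ 2 * L ^ 2 * ((1 / 2) * ∫ s in (0:ℝ)..L, (iteratedDeriv 2 θ s) ^ 2) ∧
    ‖(1 / (L:ℂ)) * ∫ s in (0:ℝ)..L,
        ((deriv θ s : ℝ) : ℂ) * Complex.exp (Complex.I * ((2 * π * (ω:ℝ) * s / L : ℝ) : ℂ))‖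
      ≤ 2 * L ^ 2 * ((1 / 2) * ∫ s in (0:ℝ)..L, (iteratedDeriv 2 θ s) ^ 2) := by
  have hwind' : θ L = θ 0 + 2 * π * ω := by simpa using hwind 0
  have hθ' : ContDiff ℝ ((⊤:ℕ∞):WithTop ℕ∞) θ := hθ.of_le (by simp)
  have hkC : ContDiff ℝ ((⊤:ℕ∞):WithTop ℕ∞) (deriv θ) := (contDiff_infty_iff_deriv.mp hθ').2
  have hk'c : Continuous (deriv (deriv θ)) := ((contDiff_infty_iff_deriv.mp hkC).2).continuous
  have hiter : iteratedDeriv 2 θ = deriv (deriv θ) := by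
    ext x
    simp [iteratedDeriv_succ, iteratedDeriv_one]
  rw [hiter]
  set M := ∫ u in (0:ℝ)..L, |deriv (deriv θ) u| with hM
  set E' := ∫ s in (0:ℝ)..L, (deriv (deriv θ) s)^2 with hE
  have hCS : M^2 ≤ L * E' := by
    have h := sq_integral_le (fun u => |deriv (deriv θ) u|) L hL hk'c.abs (fun s => abs_nonneg _)
    simpa [sq_abs] using h
  have hEnn : 0 ≤ E' := intervalIntegral.integral_nonneg hL.le fun u _ => sq_nonneg _
  have h1L : ‖(1/(L:ℂ))‖ = 1/L := by
    rw [show (1/(L:ℂ)) = ((1/L : ℝ):ℂ) by push_cast; ring, Complex.norm_real,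
      Real.norm_eq_abs, abs_of_nonneg (by positivity)]
  have hrhs : 2 * L ^ 2 * ((1/2) * E') = L^2 * E' := by ring
  constructor
  · have haux := fourier_aux θ L ω hL hθ hwind' hclosedx hclosedy (-1) (Or.inr rfl)
    have harg : (∫ s in (0:ℝ)..L, ((deriv θ s : ℝ):ℂ)
          * Complex.exp (-Complex.I * ((2*π*(ω:ℝ)*s/L : ℝ):ℂ)))
        = ∫ s in (0:ℝ)..L, ((deriv θ s : ℝ):ℂ)
          * Complex.exp ((((-1:ℝ)):ℂ) * Complex.I * ((2*π*(ω:ℝ)*s/L : ℝ):ℂ)) := by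
      apply intervalIntegral.integral_congr
      intro s _
      beta_reduce
      norm_num
    rw [norm_mul, h1L, harg, hrhs, one_div, inv_mul_le_iff₀ hL]
    have hstep : L^2 * M^2 ≤ L^2 * (L * E') :=
      mul_le_mul_of_nonneg_left hCS (by positivity)
    refine haux.trans (hstep.trans (le_of_eq ?_))
    ring
  · have haux := fourier_aux θ L ω hL hθ hwind' hclosedx hclosedy 1 (Or.inl rfl)
    have harg : (∫ s in (0:ℝ)..L, ((deriv θ s : ℝ):ℂ)
          * Complex.exp (Complex.I * ((2*π*(ω:ℝ)*s/L : ℝ):ℂ)))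
        = ∫ s in (0:ℝ)..L, ((deriv θ s : ℝ):ℂ)
          * Complex.exp ((((1:ℝ)):ℂ) * Complex.I * ((2*π*(ω:ℝ)*s/L : ℝ):ℂ)) := by
      apply intervalIntegral.integral_congr
      intro s _
      beta_reduce
      norm_num
    rw [norm_mul, h1L, harg, hrhs, one_div, inv_mul_le_iff₀ hL]
    have hstep : L^2 * M^2 ≤ L^2 * (L * E') :=
      mul_le_mul_of_nonneg_left hCS (by positivity)
    refine haux.trans (hstep.trans (le_of_eq ?_))
    ring
end
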